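/- Let M be a finite-dimensional real vector space regarded as a manifold via its identity chart, and let B be a smooth 2-form on M. Then for all smooth sections X+ξ, Y+η of T ⊕ T*, [e^B(X+ξ), e^B(Y+η)] = e^B([X+ξ, Y+η]) + i_Y i_X dB, where e^B is the map of sections X+ξ ↦ X + ξ + i_X B. Consequently, e^B is an automorphism of the Courant bracket if and only if dB = 0. -/

import Mathlib

noncomputable section

variable {E : Type*} [NormedAddCommGroup E] [NormedSpace ℝ E]

/-- The Lie bracket of vector fields on the vector space `E`,
`[X,Y] = DY·X − DX·Y`. -/
def lieVF (X Y : E → E) : E → E :=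
  fun x => fderiv ℝ Y x (X x) - fderiv ℝ X x (Y x)

/-- The Lie derivative of a 1-form along a vector field,
`L_X η = i_X dη + d(η(X))`, where `dη(u,v) = (Dη·u)(v) − (Dη·v)(u)`. -/
def lieD (X : E → E) (η : E → E →L[ℝ] ℝ) : E → E →L[ℝ] ℝ :=
  fun x => (fderiv ℝ η x (X x) - (fderiv ℝ η x).flip (X x)) +
    fderiv ℝ (fun y => η y (X y)) x

/-- The pointwise inner product of sections of `T ⊕ T*`:
`⟨X+ξ, Y+η⟩ = (1/2)(ξ(Y) + η(X))`. -/
def secIP (A B : (E → E) × (E → E →L[ℝ] ℝ)) : E → ℝ :=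
  fun x => (A.2 x (B.1 x) + B.2 x (A.1 x)) / 2

/-- The Courant bracket of sections of `T ⊕ T*`:
`[X+ξ, Y+η] = [X,Y] + L_X η − L_Y ξ − (1/2) d(i_X η − i_Y ξ)`. -/
def courant (A B : (E → E) × (E → E →L[ℝ] ℝ)) :
    (E → E) × (E → E →L[ℝ] ℝ) :=
  (lieVF A.1 B.1,
   fun x => lieD A.1 B.2 x - lieD B.1 A.2 x -
     (2 : ℝ)⁻¹ • fderiv ℝ (fun y => B.2 y (A.1 y) - A.2 y (B.1 y)) x)

/-- A section of `T ⊕ T*` is smooth if both its components are. -/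
def SmoothSec (A : (E → E) × (E → E →L[ℝ] ℝ)) : Prop :=
  ContDiff ℝ (⊤ : ℕ∞) A.1 ∧ ContDiff ℝ (⊤ : ℕ∞) A.2

/-- The B-field transform `e^B : X + ξ ↦ X + ξ + i_X B` acting on sections of
`T ⊕ T*`, for a 2-form `B`. -/
def eBfield (B : E → E →L[ℝ] E →L[ℝ] ℝ) (A : (E → E) × (E → E →L[ℝ] ℝ)) :
    (E → E) × (E → E →L[ℝ] ℝ) :=
  (A.1, fun x => A.2 x + B x (A.1 x))

/-- The value of the exterior derivative of a 2-form `B`,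
`dB(u,v,w) = (DB·u)(v,w) − (DB·v)(u,w) + (DB·w)(u,v)`. -/
def dTwoForm (B : E → E →L[ℝ] E →L[ℝ] ℝ) (x u v w : E) : ℝ :=
  fderiv ℝ B x u v w - fderiv ℝ B x v u w + fderiv ℝ B x w u v

/-- Derivative of evaluation of a CLM-valued map at a constant vector. -/
lemma fda_const {G : Type*} [NormedAddCommGroup G] [NormedSpace ℝ G]
    {c : E → E →L[ℝ] G} {x : E} (hc : DifferentiableAt ℝ c x) (u : E) (v : E) :
    fderiv ℝ (fun y => c y u) x v = fderiv ℝ c x v u := by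
  rw [fderiv_clm_apply hc (differentiableAt_const u)]; simp

lemma fderiv_B_eval (B : E → E →L[ℝ] E →L[ℝ] ℝ) {x : E}
    (hB : DifferentiableAt ℝ B x) (u w v : E) :
    fderiv ℝ (fun y => B y u w) x v = fderiv ℝ B x v u w := by
  have h1 : DifferentiableAt ℝ (fun y => B y u) x :=
    hB.clm_apply (differentiableAt_const u)
  rw [fda_const h1 w v, fda_const hB u v]

/-- Antisymmetry of the derivative of an antisymmetric form. -/
lemma fderiv_B_alt (B : E → E →L[ℝ] E →L[ℝ] ℝ) {x : E}
    (hB : DifferentiableAt ℝ B x) (halt : ∀ x u v, B x u v = - B x v u)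
    (v u w : E) : fderiv ℝ B x v u w = - fderiv ℝ B x v w u := by
  have h1 : (fun y => B y u w) = fun y => -(B y w u) := funext fun y => halt y u w
  have := congrArg (fun f => fderiv ℝ f x v) h1
  rw [fderiv_B_eval B hB u w v] at this
  rw [this, fderiv_fun_neg]
  simp [fderiv_B_eval B hB w u v]

set_option maxHeartbeats 1000000 in
/-- The key pointwise identity for the 1-form components. -/
lemma key_eB (B : E → E →L[ℝ] E →L[ℝ] ℝ) (hB : ContDiff ℝ (⊤ : ℕ∞) B)
    (halt : ∀ x u v, B x u v = - B x v u)
    (X Y : E → E) (ξ η : E → E →L[ℝ] ℝ)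
    (hX : ContDiff ℝ (⊤ : ℕ∞) X) (hY : ContDiff ℝ (⊤ : ℕ∞) Y)
    (hξ : ContDiff ℝ (⊤ : ℕ∞) ξ) (hη : ContDiff ℝ (⊤ : ℕ∞) η) (x : E) :
    (courant (eBfield B (X, ξ)) (eBfield B (Y, η))).2 x =
      (courant (X, ξ) (Y, η)).2 x + B x (lieVF X Y x) +
      (fderiv ℝ B x (X x) (Y x) - fderiv ℝ B x (Y x) (X x) +
        ((fderiv ℝ B x).flip (X x)).flip (Y x)) := by
  have hBx : DifferentiableAt ℝ B x := (hB.differentiable (by simp)) x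
  have hXx : DifferentiableAt ℝ X x := (hX.differentiable (by simp)) x
  have hYx : DifferentiableAt ℝ Y x := (hY.differentiable (by simp)) x
  have hξx : DifferentiableAt ℝ ξ x := (hξ.differentiable (by simp)) x
  have hηx : DifferentiableAt ℝ η x := (hη.differentiable (by simp)) x
  have hBY : DifferentiableAt ℝ (fun y => B y (Y y)) x := hBx.clm_apply hYx
  have hBX : DifferentiableAt ℝ (fun y => B y (X y)) x := hBx.clm_apply hXx
  have e2 : fderiv ℝ (fun y => B y (Y y)) x
      = (B x).comp (fderiv ℝ Y x) + (fderiv ℝ B x).flip (Y x) :=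
    fderiv_clm_apply hBx hYx
  have e4 : fderiv ℝ (fun y => B y (X y)) x
      = (B x).comp (fderiv ℝ X x) + (fderiv ℝ B x).flip (X x) :=
    fderiv_clm_apply hBx hXx
  have e1 : fderiv ℝ (fun y => η y + B y (Y y)) x
      = fderiv ℝ η x + fderiv ℝ (fun y => B y (Y y)) x := fderiv_add hηx hBY
  have e3 : fderiv ℝ (fun y => ξ y + B y (X y)) x
      = fderiv ℝ ξ x + fderiv ℝ (fun y => B y (X y)) x := fderiv_add hξx hBX
  have s1 : fderiv ℝ (fun y => (η y + B y (Y y)) (X y)) x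
      = (η x + B x (Y x)).comp (fderiv ℝ X x) +
        (fderiv ℝ (fun y => η y + B y (Y y)) x).flip (X x) :=
    fderiv_clm_apply (hηx.add hBY) hXx
  have s2 : fderiv ℝ (fun y => (ξ y + B y (X y)) (Y y)) x
      = (ξ x + B x (X x)).comp (fderiv ℝ Y x) +
        (fderiv ℝ (fun y => ξ y + B y (X y)) x).flip (Y x) :=
    fderiv_clm_apply (hξx.add hBX) hYx
  have sdiff : fderiv ℝ (fun y => (η y + B y (Y y)) (X y) - (ξ y + B y (X y)) (Y y)) x
      = fderiv ℝ (fun y => (η y + B y (Y y)) (X y)) x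
        - fderiv ℝ (fun y => (ξ y + B y (X y)) (Y y)) x :=
    fderiv_sub ((hηx.add hBY).clm_apply hXx) ((hξx.add hBX).clm_apply hYx)
  have r1 : fderiv ℝ (fun y => η y (X y)) x
      = (η x).comp (fderiv ℝ X x) + (fderiv ℝ η x).flip (X x) :=
    fderiv_clm_apply hηx hXx
  have r2 : fderiv ℝ (fun y => ξ y (Y y)) x
      = (ξ x).comp (fderiv ℝ Y x) + (fderiv ℝ ξ x).flip (Y x) :=
    fderiv_clm_apply hξx hYx
  have rdiff : fderiv ℝ (fun y => η y (X y) - ξ y (Y y)) x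
      = fderiv ℝ (fun y => η y (X y)) x - fderiv ℝ (fun y => ξ y (Y y)) x :=
    fderiv_sub (hηx.clm_apply hXx) (hξx.clm_apply hYx)
  ext v
  simp only [courant, eBfield, lieD, lieVF]
  rw [sdiff, s1, s2, rdiff, r1, r2, e1, e2, e3, e4]
  simp only [ContinuousLinearMap.add_apply, ContinuousLinearMap.sub_apply,
    ContinuousLinearMap.coe_comp', Function.comp_apply, ContinuousLinearMap.flip_apply,
    ContinuousLinearMap.smul_apply, smul_eq_mul, map_add, map_sub]
  linear_combination (-(2:ℝ)⁻¹) * (halt x (fderiv ℝ Y x v) (X x))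
    + (2:ℝ)⁻¹ * (halt x (fderiv ℝ X x v) (Y x))
    + (-(2:ℝ)⁻¹) * (fderiv_B_alt B hBx halt v (Y x) (X x))

set_option maxHeartbeats 1000000 in
/-- `[e^B(X+ξ), e^B(Y+η)] = e^B([X+ξ, Y+η]) + i_Y i_X dB`; consequently `e^B`
is an automorphism of the Courant bracket if and only if `dB = 0`. -/
theorem courant_eBfield
    [FiniteDimensional ℝ E]
    (B : E → E →L[ℝ] E →L[ℝ] ℝ) (hB : ContDiff ℝ (⊤ : ℕ∞) B)
    (halt : ∀ x u v, B x u v = - B x v u) :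
    (∀ A C : (E → E) × (E → E →L[ℝ] ℝ), SmoothSec A → SmoothSec C →
      courant (eBfield B A) (eBfield B C) =
        eBfield B (courant A C) +
          ((fun _ => (0 : E)),
           fun x => fderiv ℝ B x (A.1 x) (C.1 x) - fderiv ℝ B x (C.1 x) (A.1 x) +
             ((fderiv ℝ B x).flip (A.1 x)).flip (C.1 x))) ∧
    ((∀ A C : (E → E) × (E → E →L[ℝ] ℝ), SmoothSec A → SmoothSec C →
        courant (eBfield B A) (eBfield B C) = eBfield B (courant A C)) ↔
      ∀ x u v w, dTwoForm B x u v w = 0) := by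
  have main : ∀ A C : (E → E) × (E → E →L[ℝ] ℝ), SmoothSec A → SmoothSec C →
      courant (eBfield B A) (eBfield B C) =
        eBfield B (courant A C) +
          ((fun _ => (0 : E)),
           fun x => fderiv ℝ B x (A.1 x) (C.1 x) - fderiv ℝ B x (C.1 x) (A.1 x) +
             ((fderiv ℝ B x).flip (A.1 x)).flip (C.1 x)) := by
    rintro ⟨X, ξ⟩ ⟨Y, η⟩ ⟨hX, hξ⟩ ⟨hY, hη⟩
    refine Prod.ext ?_ ?_
    · funext x
      simp [courant, eBfield, Prod.fst_add]
    · funext x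
      have h := key_eB B hB halt X Y ξ η hX hY hξ hη x
      simp only [courant, eBfield, Prod.snd_add, Pi.add_apply] at h ⊢
      simp only [courant, eBfield, lieVF] at h
      rw [h]
      simp only [lieVF]
  refine ⟨main, ?_, ?_⟩
  · intro h x u v w
    set A : (E → E) × (E → E →L[ℝ] ℝ) := ((fun _ => u), fun _ => 0) with hAdef
    set C : (E → E) × (E → E →L[ℝ] ℝ) := ((fun _ => v), fun _ => 0) with hCdef
    have hA : SmoothSec A := ⟨contDiff_const, contDiff_const⟩
    have hC : SmoothSec C := ⟨contDiff_const, contDiff_const⟩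
    have h1 := main A C hA hC
    have h2 := h A C hA hC
    have h3 := left_eq_add.mp (h1.symm.trans h2).symm
    have h4 := congrArg Prod.snd h3
    have h5 := congrFun h4 x
    have h6 := DFunLike.congr_fun h5 w
    simp only [hAdef, hCdef, ContinuousLinearMap.add_apply, ContinuousLinearMap.sub_apply,
      ContinuousLinearMap.flip_apply, Prod.snd_zero, Pi.zero_apply,
      ContinuousLinearMap.zero_apply, ContinuousLinearMap.coe_zero] at h6
    simpa [dTwoForm] using h6
  · intro hd A C hA hC
    rw [main A C hA hC]
    have hz : ((fun _ => (0 : E)),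
        fun x => fderiv ℝ B x (A.1 x) (C.1 x) - fderiv ℝ B x (C.1 x) (A.1 x) +
          ((fderiv ℝ B x).flip (A.1 x)).flip (C.1 x)) =
        (0 : (E → E) × (E → E →L[ℝ] ℝ)) := by
      refine Prod.ext ?_ ?_
      · rfl
      · funext x
        ext w
        have := hd x (A.1 x) (C.1 x) w
        simp only [dTwoForm] at this
        simp only [ContinuousLinearMap.add_apply, ContinuousLinearMap.sub_apply,
          ContinuousLinearMap.flip_apply, Prod.snd_zero, Pi.zero_apply,
          ContinuousLinearMap.zero_apply]
        linarith
    rw [hz, add_zero]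

end
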